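/- Let (d_i)_{i≥1} be an infinite alternate Lyndon word over the finite alphabet A = {0,1,…,d_1} and let M be the associated Lyndon system with H_n the number of words of length n in its language L_M. Then H_0 = 1 and for all n ≥ 1, H_n = Σ_{k=1}^{n} (−1)^k (d_{k−1} − d_k) H_{n−k} + 1, where d_0 = 0. -/

import Mathlib

open Filter Topology

/-- Alternate (Ito–Sadahiro) strict order on infinite sequences (0-indexed: entry `i`
is the `(i+1)`-th letter `x_{i+1}` of the paper). `altLt x y` iff at the first index
where they differ the comparison alternates with the parity of the index:
`(-1)^k (x_k - y_k) < 0` in 1-based indexing. -/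
def altLt (x y : ℕ → ℕ) : Prop :=
  ∃ k : ℕ, (∀ i < k, x i = y i) ∧ (if Even k then y k < x k else x k < y k)

def altLe (x y : ℕ → ℕ) : Prop := x = y ∨ altLt x y

def shiftSeq (x : ℕ → ℕ) (k : ℕ) : ℕ → ℕ := fun i => x (k + i)

/-- An alternate Lyndon word: smaller (in the alternate order) than all of its shifts. -/
def IsAltLyndon (d : ℕ → ℕ) : Prop := ∀ k : ℕ, altLe d (shiftSeq d k)

/-- The Lyndon system associated to `d`: sequences over the alphabet `{0, …, d_1}`
all of whose shifts dominate `d` in the alternate order. -/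
def LyndonSystem (d : ℕ → ℕ) : Set (ℕ → ℕ) :=
  {x | (∀ i, x i ≤ d 0) ∧ ∀ k : ℕ, altLe d (shiftSeq x k)}

def IsFactorOf (w : List ℕ) (x : ℕ → ℕ) : Prop :=
  ∃ k : ℕ, w = (List.range w.length).map (fun i => x (k + i))

/-- The language of the Lyndon system: finite factors of its elements. -/
def LyndonLang (d : ℕ → ℕ) : Set (List ℕ) :=
  {w | ∃ x ∈ LyndonSystem d, IsFactorOf w x}

/-- `Hword d n` is the number of words of length `n` in the language `L_M`. -/
noncomputable def Hword (d : ℕ → ℕ) (n : ℕ) : ℕ :=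
  Set.ncard {w : List ℕ | w ∈ LyndonLang d ∧ w.length = n}

/-- The topological entropy of the Lyndon system of `d` equals `h`,
i.e. `lim_{n→∞} (log H_n)/n = h`. -/
def EntropyIs (d : ℕ → ℕ) (h : ℝ) : Prop :=
  Filter.Tendsto (fun n : ℕ => Real.log (Hword d n) / n) Filter.atTop (nhds h)

/-- `dz d k` is the paper's digit `d_k` (1-based) with the convention `d_0 = 0`. -/
def dz (d : ℕ → ℕ) (k : ℕ) : ℤ := if k = 0 then 0 else (d (k - 1) : ℤ)

/-!
Indices of `d` start at `0`. Call a word admissible when each of its suffixes dominates the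
prefix of `d` of the same length; as `d` is minimal among its shifts, `L_M` consists exactly of
the admissible words over `{0, …, d 0}`. Let `Ψᵢ(m)` and `Φᵢ(m)` count the admissible words of
length `m` below and above `d i ⋯ d (i + m - 1)`. Totality and antisymmetry of the order give
`Ψᵢ(m) + Φᵢ(m) = H_m + 1`, and sorting by the first letter gives
`Φᵢ(m + 1) = d i · H_m + Ψᵢ₊₁(m)`, so `Ψᵢ(m + 1) + Ψᵢ₊₁(m) = H_{m+1} + 1 - d i · H_m`, while
`Ψ₀ ≡ 1` by minimality of `d` and `Ψᵢ(0) = 1`. The alternating sum of these identities along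
the diagonal `i + m = n` telescopes, and adding the sums for `n` and `n + 1` yields the
recurrence.
-/

open Finset

theorem shiftSeq_zero (x : ℕ → ℕ) : shiftSeq x 0 = x := by
  funext i
  simp [shiftSeq]

theorem shiftSeq_shiftSeq (x : ℕ → ℕ) (k j : ℕ) :
    shiftSeq (shiftSeq x k) j = shiftSeq x (k + j) := by
  funext i
  simp [shiftSeq, add_assoc]

theorem altLt_iff_head {x y : ℕ → ℕ} :
    altLt x y ↔ y 0 < x 0 ∨ (x 0 = y 0 ∧ altLt (shiftSeq y 1) (shiftSeq x 1)) := by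
  constructor
  · rintro ⟨_ | k, hagree, hcond⟩
    · exact Or.inl (by simpa using hcond)
    · refine Or.inr ⟨hagree 0 k.succ_pos, k, fun i hi => ?_, ?_⟩
      · simpa [shiftSeq, add_comm] using (hagree (i + 1) (by omega)).symm
      · by_cases hk : Even k <;> simpa [shiftSeq, add_comm, Nat.even_add_one, hk] using hcond
  · rintro (h | ⟨h0, k, hagree, hcond⟩)
    · exact ⟨0, fun i hi => absurd hi (Nat.not_lt_zero i), by simpa using h⟩
    · refine ⟨k + 1, fun i hi => ?_, ?_⟩
      · rcases i with _ | i
        · exact h0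
        · simpa [shiftSeq, add_comm] using (hagree i (by omega)).symm
      · by_cases hk : Even k <;> simpa [shiftSeq, add_comm, Nat.even_add_one, hk] using hcond

theorem lt_or_altLe_tail_of_altLe {x y : ℕ → ℕ} (h : altLe x y) :
    y 0 < x 0 ∨ (x 0 = y 0 ∧ altLe (shiftSeq y 1) (shiftSeq x 1)) := by
  rcases h with rfl | h
  · exact Or.inr ⟨rfl, Or.inl rfl⟩
  · exact (altLt_iff_head.1 h).imp_right fun h => ⟨h.1, Or.inr h.2⟩

/-- The alternate order on words of equal length; on words of different lengths the value is a
junk `True`, never used. -/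
def altWordLe : List ℕ → List ℕ → Prop
  | p :: u, q :: v => q < p ∨ (p = q ∧ altWordLe v u)
  | _, _ => True
termination_by u v => u.length + v.length

@[simp] theorem altWordLe_nil_left (v : List ℕ) : altWordLe [] v := by
  simp [altWordLe]

@[simp] theorem altWordLe_nil_right (u : List ℕ) : altWordLe u [] := by
  cases u <;> simp [altWordLe]

@[simp] theorem altWordLe_cons_cons {p q : ℕ} {u v : List ℕ} :
    altWordLe (p :: u) (q :: v) ↔ q < p ∨ (p = q ∧ altWordLe v u) := by
  rw [altWordLe]

theorem altWordLe_refl : ∀ u : List ℕ, altWordLe u u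
  | [] => by simp
  | _ :: u => by simp [altWordLe_refl u]

theorem altWordLe_total : ∀ u v : List ℕ, altWordLe u v ∨ altWordLe v u
  | [], _ | _ :: _, [] => by simp
  | p :: u, q :: v => by
    rcases lt_trichotomy p q with h | rfl | h
    · simp [h]
    · simpa using altWordLe_total v u
    · simp [h]
termination_by u v => u.length + v.length

theorem altWordLe_antisymm :
    ∀ {u v : List ℕ}, u.length = v.length → altWordLe u v → altWordLe v u → u = v
  | [], [], _, _, _ => rfl
  | p :: u, q :: v, hlen, h₁, h₂ => by
    simp only [altWordLe_cons_cons] at h₁ h₂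
    obtain ⟨rfl, hvu⟩ : p = q ∧ altWordLe v u := by
      rcases h₁ with h₁ | h₁ <;> rcases h₂ with h₂ | h₂ <;> first | exact h₁ | omega
    have huv : altWordLe u v := (h₂.resolve_left (lt_irrefl p)).2
    rw [altWordLe_antisymm (by simpa using hlen) huv hvu]
termination_by u v => u.length + v.length

theorem altWordLe_trans :
    ∀ {u v w : List ℕ}, u.length = v.length → v.length = w.length →
      altWordLe u v → altWordLe v w → altWordLe u w
  | [], _, _, _, _, _, _ | _ :: _, _, [], _, _, _, _ => by simp
  | p :: u, q :: v, r :: w, huv, hvw, h₁, h₂ => by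
    simp only [altWordLe_cons_cons] at h₁ h₂ ⊢
    rcases h₁ with h₁ | ⟨rfl, h₁⟩ <;> rcases h₂ with h₂ | ⟨rfl, h₂⟩
    · exact Or.inl (h₂.trans h₁)
    · exact Or.inl h₁
    · exact Or.inl h₂
    · exact Or.inr ⟨rfl, altWordLe_trans (by simpa using hvw.symm) (by simpa using huv.symm) h₂ h₁⟩
termination_by u v w => u.length + v.length + w.length

def prefixWord (x : ℕ → ℕ) (m : ℕ) : List ℕ := (List.range m).map x

@[simp] theorem length_prefixWord (x : ℕ → ℕ) (m : ℕ) : (prefixWord x m).length = m := by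
  simp [prefixWord]

theorem prefixWord_succ (x : ℕ → ℕ) (m : ℕ) :
    prefixWord x (m + 1) = x 0 :: prefixWord (shiftSeq x 1) m := by
  simp [prefixWord, List.range_succ_eq_map, shiftSeq, Function.comp_def, add_comm]

theorem prefixWord_congr {x y : ℕ → ℕ} {m : ℕ} (h : ∀ i < m, x i = y i) :
    prefixWord x m = prefixWord y m :=
  List.map_congr_left fun i hi => h i (List.mem_range.1 hi)

theorem altWordLe_prefixWord_of_altLe {x y : ℕ → ℕ} (h : altLe x y) (m : ℕ) :
    altWordLe (prefixWord x m) (prefixWord y m) := by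
  induction m generalizing x y with
  | zero => simp [prefixWord]
  | succ m ih =>
    rw [prefixWord_succ, prefixWord_succ, altWordLe_cons_cons]
    exact (lt_or_altLe_tail_of_altLe h).imp_right fun h => ⟨h.1, ih h.2⟩

theorem eqOn_or_altLt_of_altWordLe {x y : ℕ → ℕ} {m : ℕ}
    (h : altWordLe (prefixWord x m) (prefixWord y m)) : (∀ i < m, x i = y i) ∨ altLt x y := by
  induction m generalizing x y with
  | zero => exact Or.inl fun i hi => absurd hi (Nat.not_lt_zero i)
  | succ m ih =>
    rw [prefixWord_succ, prefixWord_succ, altWordLe_cons_cons] at h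
    rcases h with h | ⟨h0, h⟩
    · exact Or.inr (altLt_iff_head.2 (Or.inl h))
    · rcases ih h with htail | htail
      · refine Or.inl fun i hi => ?_
        rcases i with _ | i
        · exact h0
        · simpa [shiftSeq, add_comm] using (htail i (by omega)).symm
      · exact Or.inr (altLt_iff_head.2 (Or.inr ⟨h0, htail⟩))

namespace IsAltLyndon

variable {d : ℕ → ℕ}

theorem le_zero (hd : IsAltLyndon d) (t : ℕ) : d t ≤ d 0 := by
  rcases lt_or_altLe_tail_of_altLe (hd t) with h | h
  · exact (by simpa [shiftSeq] using h : d t < d 0).le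
  · exact (by simpa [shiftSeq] using h.1 : d 0 = d t).ge

theorem mem_lyndonSystem (hd : IsAltLyndon d) : d ∈ LyndonSystem d :=
  ⟨IsAltLyndon.le_zero hd, hd⟩

/-- Minimality of `d` against its `i`-th shift, read past a common first letter. -/
theorem altWordLe_tail (hd : IsAltLyndon d) {i : ℕ} (hi : d i = d 0) (m : ℕ) :
    altWordLe (prefixWord (shiftSeq d (i + 1)) m) (prefixWord (shiftSeq d 1) m) := by
  rcases lt_or_altLe_tail_of_altLe (hd i) with h | h
  · exact absurd hi (by simpa [shiftSeq] using h.ne)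
  · rw [← shiftSeq_shiftSeq]
    exact altWordLe_prefixWord_of_altLe h.2 m

end IsAltLyndon

def IsAdmissible (d : ℕ → ℕ) : List ℕ → Prop
  | [] => True
  | a :: u => altWordLe (prefixWord d (u.length + 1)) (a :: u) ∧ IsAdmissible d u

section Admissible

open Classical

variable {d : ℕ → ℕ}

@[simp] theorem isAdmissible_nil : IsAdmissible d [] := trivial

theorem IsAdmissible.altWordLe {w : List ℕ} (h : IsAdmissible d w) :
    altWordLe (prefixWord d w.length) w := by
  cases w with
  | nil => simp
  | cons a u => exact h.1

theorem isAdmissible_prefixWord {y : ℕ → ℕ} (hy : ∀ k, altLe d (shiftSeq y k)) (m : ℕ) :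
    IsAdmissible d (prefixWord y m) := by
  induction m generalizing y with
  | zero => simp [prefixWord]
  | succ m ih =>
    rw [prefixWord_succ]
    refine ⟨?_, ih fun k => by rw [shiftSeq_shiftSeq]; exact hy _⟩
    rw [length_prefixWord, ← prefixWord_succ]
    exact altWordLe_prefixWord_of_altLe (by simpa [shiftSeq_zero] using hy 0) _

def seqCons (a : ℕ) (y : ℕ → ℕ) : ℕ → ℕ
  | 0 => a
  | i + 1 => y i

theorem shiftSeq_seqCons (a : ℕ) (y : ℕ → ℕ) (k : ℕ) :
    shiftSeq (seqCons a y) (k + 1) = shiftSeq y k := by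
  funext i
  simp only [shiftSeq, Nat.add_right_comm k 1 i]
  rfl

/-- Extend `a :: u` by `a` followed by an extension of `u`; if that fails the first-letter
condition, the comparison with `d` was an equality and `d` itself extends `a :: u`. -/
theorem exists_mem_lyndonSystem_prefixWord_eq (hd : IsAltLyndon d) :
    ∀ {w : List ℕ}, IsAdmissible d w → (∀ a ∈ w, a ≤ d 0) →
      ∃ x ∈ LyndonSystem d, prefixWord x w.length = w
  | [], _, _ => ⟨d, IsAltLyndon.mem_lyndonSystem hd, by simp [prefixWord]⟩
  | a :: u, ⟨hle, hu⟩, hbound => by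
    obtain ⟨y, ⟨hy_le, hy_shift⟩, hyu⟩ :=
      exists_mem_lyndonSystem_prefixWord_eq hd hu fun b hb => hbound b (List.mem_cons_of_mem a hb)
    have hx : prefixWord (seqCons a y) (u.length + 1) = a :: u := by
      rw [prefixWord_succ, ← zero_add 1, shiftSeq_seqCons, shiftSeq_zero, hyu]
      rfl
    rw [← hx] at hle
    rcases eqOn_or_altLt_of_altWordLe hle with heq | hlt
    · exact ⟨d, IsAltLyndon.mem_lyndonSystem hd, (prefixWord_congr heq).trans hx⟩
    · refine ⟨seqCons a y, ⟨fun i => ?_, fun k => ?_⟩, hx⟩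
      · rcases i with _ | i
        · exact hbound a List.mem_cons_self
        · exact hy_le i
      · rcases k with _ | k
        · exact Or.inr (by rwa [shiftSeq_zero])
        · rw [shiftSeq_seqCons]
          exact hy_shift k

theorem mem_lyndonLang_iff (hd : IsAltLyndon d) {w : List ℕ} :
    w ∈ LyndonLang d ↔ IsAdmissible d w ∧ ∀ a ∈ w, a ≤ d 0 := by
  constructor
  · rintro ⟨x, ⟨hx_le, hx_shift⟩, k, hw⟩
    change w = prefixWord (shiftSeq x k) w.length at hw
    rw [hw]
    refine ⟨isAdmissible_prefixWord (fun j => ?_) _, by simp [prefixWord, shiftSeq, hx_le]⟩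
    rw [shiftSeq_shiftSeq]
    exact hx_shift _
  · rintro ⟨hadm, hbound⟩
    obtain ⟨x, hx, hxw⟩ := exists_mem_lyndonSystem_prefixWord_eq hd hadm hbound
    exact ⟨x, hx, 0, by simpa [prefixWord] using hxw.symm⟩

def boundedWords (b : ℕ) : ℕ → Finset (List ℕ)
  | 0 => {[]}
  | m + 1 => (range (b + 1)).biUnion fun a => (boundedWords b m).image (a :: ·)

theorem mem_boundedWords {b m : ℕ} {w : List ℕ} :
    w ∈ boundedWords b m ↔ w.length = m ∧ ∀ a ∈ w, a ≤ b := by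
  induction m generalizing w with
  | zero => cases w <;> simp [boundedWords]
  | succ m ih =>
    cases w with
    | nil => simp [boundedWords]
    | cons a u => simp [boundedWords, ih, and_comm, and_left_comm]

theorem prefixWord_mem_boundedWords {x : ℕ → ℕ} {b : ℕ} (hx : ∀ i, x i ≤ b) (m : ℕ) :
    prefixWord x m ∈ boundedWords b m :=
  mem_boundedWords.2 ⟨length_prefixWord x m, by simp [prefixWord, hx]⟩

theorem card_filter_boundedWords_succ (b m : ℕ) (P : List ℕ → Prop) [DecidablePred P] :
    #{w ∈ boundedWords b (m + 1) | P w} =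
      ∑ a ∈ range (b + 1), #{u ∈ boundedWords b m | P (a :: u)} := by
  rw [boundedWords, filter_biUnion, card_biUnion]
  · refine sum_congr rfl fun a _ => ?_
    rw [filter_image, card_image_of_injective _ List.cons_injective]
  · intro a _ a' _ ha
    simp only [disjoint_left, mem_filter, mem_image]
    rintro _ ⟨⟨u, _, rfl⟩, _⟩ ⟨⟨u', _, hu'⟩, _⟩
    exact ha (List.cons_eq_cons.1 hu').1.symm

noncomputable def admCount (d : ℕ → ℕ) (m : ℕ) : ℕ :=
  #{w ∈ boundedWords (d 0) m | IsAdmissible d w}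

noncomputable def admCountLe (d : ℕ → ℕ) (i m : ℕ) : ℕ :=
  #{w ∈ boundedWords (d 0) m | IsAdmissible d w ∧ altWordLe w (prefixWord (shiftSeq d i) m)}

noncomputable def admCountGe (d : ℕ → ℕ) (i m : ℕ) : ℕ :=
  #{w ∈ boundedWords (d 0) m | IsAdmissible d w ∧ altWordLe (prefixWord (shiftSeq d i) m) w}

theorem hword_eq_admCount (hd : IsAltLyndon d) (m : ℕ) : Hword d m = admCount d m := by
  rw [Hword, admCount, ← Set.ncard_coe_finset]
  congr 1
  ext w
  simp [mem_lyndonLang_iff hd, mem_boundedWords]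
  tauto

theorem admCount_zero (d : ℕ → ℕ) : admCount d 0 = 1 := by
  rw [admCount, boundedWords, filter_singleton, if_pos isAdmissible_nil, card_singleton]

theorem admCountLe_zero_right (i : ℕ) : admCountLe d i 0 = 1 := by
  rw [admCountLe, boundedWords, filter_singleton, if_pos ⟨isAdmissible_nil, by simp⟩,
    card_singleton]

theorem IsAltLyndon.isAdmissible_prefixWord_shiftSeq (hd : IsAltLyndon d) (i m : ℕ) :
    IsAdmissible d (prefixWord (shiftSeq d i) m) :=
  isAdmissible_prefixWord (fun k => by rw [shiftSeq_shiftSeq]; exact hd _) m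

theorem IsAltLyndon.prefixWord_shiftSeq_mem (hd : IsAltLyndon d) (i m : ℕ) :
    prefixWord (shiftSeq d i) m ∈ {w ∈ boundedWords (d 0) m | IsAdmissible d w} :=
  mem_filter.2 ⟨prefixWord_mem_boundedWords (fun _ => IsAltLyndon.le_zero hd _) m,
    IsAltLyndon.isAdmissible_prefixWord_shiftSeq hd i m⟩

theorem admCountLe_zero_left (hd : IsAltLyndon d) (m : ℕ) : admCountLe d 0 m = 1 := by
  rw [admCountLe, card_eq_one]
  refine ⟨prefixWord d m, eq_singleton_iff_unique_mem.2 ⟨?_, fun w hw => ?_⟩⟩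
  · have hmem := IsAltLyndon.prefixWord_shiftSeq_mem hd 0 m
    rw [shiftSeq_zero, mem_filter] at *
    exact ⟨hmem.1, hmem.2, altWordLe_refl _⟩
  · rw [shiftSeq_zero, mem_filter] at hw
    obtain ⟨hw, hadm, hle⟩ := hw
    have hlen := (mem_boundedWords.1 hw).1
    exact altWordLe_antisymm (by simp [hlen]) hle (hlen ▸ hadm.altWordLe)

theorem admCountLe_add_admCountGe (hd : IsAltLyndon d) (i m : ℕ) :
    admCountLe d i m + admCountGe d i m = admCount d m + 1 := by
  rw [admCountLe, admCountGe, admCount]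
  set v := prefixWord (shiftSeq d i) m
  have hunion : {w ∈ boundedWords (d 0) m | IsAdmissible d w ∧ altWordLe w v} ∪
      {w ∈ boundedWords (d 0) m | IsAdmissible d w ∧ altWordLe v w} =
      {w ∈ boundedWords (d 0) m | IsAdmissible d w} := by
    rw [← filter_or]
    refine filter_congr fun w _ => ?_
    rw [← and_or_left, and_iff_left (altWordLe_total w v)]
  have hinter : {w ∈ boundedWords (d 0) m | IsAdmissible d w ∧ altWordLe w v} ∩
      {w ∈ boundedWords (d 0) m | IsAdmissible d w ∧ altWordLe v w} = {v} := by
    rw [← filter_and, eq_singleton_iff_unique_mem]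
    refine ⟨?_, fun w hw => ?_⟩
    · have hmem := IsAltLyndon.prefixWord_shiftSeq_mem hd i m
      rw [mem_filter] at *
      exact ⟨hmem.1, ⟨hmem.2, altWordLe_refl v⟩, hmem.2, altWordLe_refl v⟩
    · obtain ⟨hw, ⟨-, hle⟩, -, hge⟩ := mem_filter.1 hw
      exact altWordLe_antisymm (by simp [v, (mem_boundedWords.1 hw).1]) hle hge
  have := card_union_add_card_inter
    {w ∈ boundedWords (d 0) m | IsAdmissible d w ∧ altWordLe w v}
    {w ∈ boundedWords (d 0) m | IsAdmissible d w ∧ altWordLe v w}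
  rw [hunion, hinter, card_singleton] at this
  omega

theorem isAdmissible_cons_and_altWordLe_iff (hd : IsAltLyndon d) {i a : ℕ} {u : List ℕ} :
    (IsAdmissible d (a :: u) ∧
        altWordLe (prefixWord (shiftSeq d i) (u.length + 1)) (a :: u)) ↔
      (a < d i ∧ IsAdmissible d u) ∨
        (a = d i ∧ IsAdmissible d u ∧ altWordLe u (prefixWord (shiftSeq d (i + 1)) u.length)) := by
  have hdi := IsAltLyndon.le_zero hd i
  simp only [IsAdmissible, prefixWord_succ, shiftSeq_shiftSeq, altWordLe_cons_cons]
  simp only [shiftSeq, add_zero]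
  constructor
  · rintro ⟨⟨-, hadm⟩, h | ⟨rfl, hle⟩⟩
    · exact Or.inl ⟨h, hadm⟩
    · exact Or.inr ⟨rfl, hadm, hle⟩
  · rintro (⟨h, hadm⟩ | ⟨rfl, hadm, hle⟩)
    · exact ⟨⟨Or.inl (by omega), hadm⟩, Or.inl h⟩
    · refine ⟨⟨?_, hadm⟩, Or.inr ⟨rfl, hle⟩⟩
      rcases hdi.lt_or_eq with h | h
      · exact Or.inl h
      · exact Or.inr ⟨h.symm, altWordLe_trans (by simp) (by simp) hle
          (IsAltLyndon.altWordLe_tail hd h u.length)⟩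

theorem admCountGe_succ (hd : IsAltLyndon d) (i m : ℕ) :
    admCountGe d i (m + 1) = d i * admCount d m + admCountLe d (i + 1) m := by
  have hfiber : ∀ a, #{u ∈ boundedWords (d 0) m | IsAdmissible d (a :: u) ∧
        altWordLe (prefixWord (shiftSeq d i) (m + 1)) (a :: u)} =
      (if a < d i then admCount d m else 0) + (if a = d i then admCountLe d (i + 1) m else 0) := by
    intro a
    rw [filter_congr (q := fun u => (a < d i ∧ IsAdmissible d u) ∨
        (a = d i ∧ IsAdmissible d u ∧ altWordLe u (prefixWord (shiftSeq d (i + 1)) m)))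
      fun u hu => by
        obtain ⟨rfl, -⟩ := mem_boundedWords.1 hu
        exact isAdmissible_cons_and_altWordLe_iff hd]
    rcases lt_trichotomy a (d i) with h | rfl | h
    · simp [h, h.ne, admCount]
    · simp [admCountLe]
    · simp [h.not_gt, h.ne']
  have hlt : #{a ∈ range (d 0 + 1) | a < d i} = d i := by
    rw [show {a ∈ range (d 0 + 1) | a < d i} = range (d i) by
      ext a; simp only [mem_filter, mem_range]; have := IsAltLyndon.le_zero hd i; omega]
    exact card_range _
  rw [admCountGe, card_filter_boundedWords_succ]
  simp only [hfiber, sum_add_distrib, sum_ite_eq', ← sum_filter, sum_const, smul_eq_mul, hlt]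
  simp [Nat.lt_succ_iff.2 (IsAltLyndon.le_zero hd i)]

theorem admCountLe_succ_add (hd : IsAltLyndon d) (i m : ℕ) :
    admCountLe d i (m + 1) + admCountLe d (i + 1) m + d i * admCount d m =
      admCount d (m + 1) + 1 := by
  have := admCountLe_add_admCountGe hd i (m + 1)
  rw [admCountGe_succ hd] at this
  omega

end Admissible

/-- The sum telescopes along the diagonal `i + m = n` of the array `ψ i m`. -/
theorem alternating_sum_eq_of_add_eq {a δ : ℕ → ℤ} {ψ : ℕ → ℕ → ℤ}
    (hstep : ∀ i m, ψ i (m + 1) + ψ (i + 1) m = a (m + 1) + 1 - δ i * a m)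
    (hleft : ∀ m, ψ 0 m = 1) (hright : ∀ i, ψ i 0 = 1) (n : ℕ) :
    ∑ i ∈ range n, (-1) ^ i * (a (n - i) + 1 - δ i * a (n - 1 - i)) = 1 - (-1) ^ n := by
  have hterm : ∀ i ∈ range n, (-1) ^ i * (a (n - i) + 1 - δ i * a (n - 1 - i)) =
      (-1) ^ i * ψ i (n - i) - (-1) ^ (i + 1) * ψ (i + 1) (n - (i + 1)) := by
    intro i hi
    have hsub₁ : n - i = n - (i + 1) + 1 := by have := mem_range.1 hi; omega
    have hsub₂ : n - 1 - i = n - (i + 1) := by omega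
    rw [hsub₁, hsub₂, ← hstep, pow_succ]
    ring
  rw [sum_congr rfl hterm, sum_range_sub' (fun i => (-1) ^ i * ψ i (n - i)), hleft,
    Nat.sub_self, hright]
  simp

theorem recurrence_of_alternating_sum (d : ℕ → ℕ) {a : ℕ → ℤ}
    (h : ∀ n, ∑ i ∈ range n, (-1) ^ i * (a (n - i) + 1 - d i * a (n - 1 - i)) = 1 - (-1) ^ n)
    {n : ℕ} (hn : 1 ≤ n) :
    a n = ∑ k ∈ Icc 1 n, (-1) ^ k * (dz d (k - 1) - dz d k) * a (n - k) + 1 := by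
  obtain ⟨N, rfl⟩ : ∃ N, n = N + 1 := ⟨n - 1, by omega⟩
  have hrhs : ∑ k ∈ Icc 1 (N + 1), (-1) ^ k * (dz d (k - 1) - dz d k) * a (N + 1 - k) =
      d 0 * a N + ∑ i ∈ range N, (-1) ^ i * (d i - d (i + 1)) * a (N - 1 - i) := by
    have hdz : ∀ k, dz d (k + 1) = d k := fun k => by simp [dz]
    rw [← Ico_add_one_right_eq_Icc, sum_Ico_eq_sum_range, Nat.add_sub_cancel, sum_range_succ',
      add_comm]
    congr 1
    · simp [dz]
    · refine sum_congr rfl fun i _ => ?_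
      rw [show 1 + (i + 1) - 1 = i + 1 by omega, show 1 + (i + 1) = i + 1 + 1 by omega,
        show N + 1 - (i + 1 + 1) = N - 1 - i by omega, hdz, hdz, pow_succ, pow_succ]
      ring
  have hlhs : ∑ i ∈ range (N + 1), (-1) ^ i * (a (N + 1 - i) + 1 - d i * a (N + 1 - 1 - i)) +
      ∑ i ∈ range N, (-1) ^ i * (a (N - i) + 1 - d i * a (N - 1 - i)) =
      a (N + 1) + 1 - d 0 * a N - ∑ i ∈ range N, (-1) ^ i * (d i - d (i + 1)) * a (N - 1 - i) := by
    rw [sum_range_succ', add_right_comm, ← sum_add_distrib, eq_sub_iff_add_eq, add_right_comm,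
      ← sum_add_distrib, sum_eq_zero fun i _ => ?_]
    · simp
    · rw [show N + 1 - (i + 1) = N - i by omega, show N + 1 - 1 - (i + 1) = N - 1 - i by omega,
        pow_succ]
      ring
  have hN1 := h (N + 1)
  rw [pow_succ] at hN1
  linarith [h N]

/-- Proposition 1: `H_0 = 1` and
`H_n = Σ_{k=1}^{n} (−1)^k (d_{k−1} − d_k) H_{n−k} + 1` for all `n ≥ 1`. -/
theorem stmt0 (d : ℕ → ℕ) (hd : IsAltLyndon d) :
    Hword d 0 = 1 ∧ ∀ n : ℕ, 1 ≤ n →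
      (Hword d n : ℤ) =
        (∑ k ∈ Finset.Icc 1 n,
          (-1 : ℤ) ^ k * (dz d (k - 1) - dz d k) * (Hword d (n - k) : ℤ)) + 1 := by
  simp only [hword_eq_admCount hd]
  refine ⟨admCount_zero d, fun n hn =>
    recurrence_of_alternating_sum d (a := fun m => admCount d m) (fun n => ?_) hn⟩
  refine alternating_sum_eq_of_add_eq (a := fun m => admCount d m) (δ := fun i => d i)
    (ψ := fun i m => admCountLe d i m) (fun i m => ?_)
    (fun m => by simp [admCountLe_zero_left hd]) (fun i => by simp [admCountLe_zero_right]) n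
  have := admCountLe_succ_add hd i m
  omega
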